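/- For every Borel probability measure G on (0,∞), there exists a Borel probability measure G' supported on the finite set {x_1, ..., x_m, W^{-1}(y_1 | x), ..., W^{-1}(y_n | x)} such that L(G') ≥ L(G), where W^{-1}(y_j | x) = min{x_i : W(x_i) = W(W^{-1}(y_j))} if some x_i satisfies W(x_i) = W(W^{-1}(y_j)), and W^{-1}(y_j | x) = W^{-1}(y_j) otherwise. -/

import Mathlib

open MeasureTheory Finset

/-!
Push `G` forward along a map that fixes every atom `x i` and sends any other point `v` to
`W⁻¹(y_k|x)`, where `W⁻¹(y_k)` is a largest threshold below `v`. Such a `v` stays in every region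
`{W ≥ y_j} = [W⁻¹(y_j), ∞)` containing it, and its weight `1/W` can only grow, because
`W(W⁻¹(y_k|x)) = W(W⁻¹(y_k)) ≤ W(v)`; the atoms only gain mass. The map depends on `v` only
through finitely many threshold tests `W⁻¹(y_k) ≤ v`, hence is measurable.
-/

open scoped ENNReal

section Pushforward

variable {α : Type*} [MeasurableSpace α] {μ : Measure α} {f : α → α}

theorem setLIntegral_le_setLIntegral_map (hf : Measurable f) {s : Set α} (hs : MeasurableSet s)
    {F : α → ℝ≥0∞} (hF : AEMeasurable F ((μ.map f).restrict s))
    (hfs : ∀ v ∈ s, f v ∈ s ∧ F v ≤ F (f v)) :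
    ∫⁻ v in s, F v ∂μ ≤ ∫⁻ v in s, F v ∂μ.map f := by
  rw [Measure.restrict_map hf hs] at hF ⊢
  rw [lintegral_map' hF hf.aemeasurable]
  calc ∫⁻ v in s, F v ∂μ ≤ ∫⁻ v in s, F (f v) ∂μ := setLIntegral_mono' hs fun v hv => (hfs v hv).2
    _ ≤ ∫⁻ v in f ⁻¹' s, F (f v) ∂μ := lintegral_mono_set fun v hv => (hfs v hv).1

theorem likelihood_le_likelihood_map (hf : Measurable f) {m n : ℕ} (x : Fin m → α)
    (hfx : ∀ i, f (x i) = x i) (s : Fin n → Set α) (hs : ∀ j, MeasurableSet (s j))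
    (F : α → ℝ≥0∞) (hF : ∀ j, AEMeasurable F ((μ.map f).restrict (s j)))
    (hfs : ∀ j, ∀ v ∈ s j, f v ∈ s j ∧ F v ≤ F (f v)) :
    (∏ i, μ {x i}) * ∏ j, ∫⁻ v in s j, F v ∂μ ≤
      (∏ i, μ.map f {x i}) * ∏ j, ∫⁻ v in s j, F v ∂μ.map f := by
  refine mul_le_mul' (prod_le_prod' fun i _ => ?_) (prod_le_prod' fun j _ =>
    setLIntegral_le_setLIntegral_map hf (hs j) (hF j) (hfs j))
  calc μ {x i} ≤ μ (f ⁻¹' {x i}) := measure_mono (by simp [hfx])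
    _ ≤ μ.map f {x i} := Measure.le_map_apply hf.aemeasurable _

end Pushforward

section MoveToSupport

variable {m n : ℕ} (x : Fin m → ℝ) (a b : Fin n → ℝ) (s₀ : ℝ)

-- Taking the tests `p k = (a k ≤ v)` as argument, rather than `v`, makes `moveToSupport`
-- measurable for free: `Fin n → Prop` is countable and discrete.
open Classical in
noncomputable def targetOfLargestThreshold (p : Fin n → Prop) : ℝ :=
  if h : ∃ k, p k ∧ ∀ l, p l → a l ≤ a k then b h.choose else s₀

noncomputable def moveToSupport (v : ℝ) : ℝ :=
  if v ∈ Set.range x then v else targetOfLargestThreshold a b s₀ fun k => a k ≤ v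

theorem measurable_moveToSupport : Measurable (moveToSupport x a b s₀) :=
  Measurable.ite (Set.finite_range x).measurableSet measurable_id <|
    (measurable_of_countable (targetOfLargestThreshold a b s₀)).comp <|
      measurable_pi_lambda _ fun k => measurableSet_setOfPred.1 (measurableSet_Ici (a := a k))

theorem moveToSupport_apply_atom (i : Fin m) : moveToSupport x a b s₀ (x i) = x i :=
  if_pos (Set.mem_range_self i)

theorem moveToSupport_mem (hs₀ : s₀ ∈ Set.range x ∪ Set.range b) (v : ℝ) :
    moveToSupport x a b s₀ v ∈ Set.range x ∪ Set.range b := by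
  unfold moveToSupport targetOfLargestThreshold
  split_ifs with hv
  · exact .inl hv
  · exact .inr (Set.mem_range_self _)
  · exact hs₀

theorem exists_moveToSupport_eq {v : ℝ} (hv : v ∉ Set.range x) {j : Fin n} (hj : a j ≤ v) :
    ∃ k, a j ≤ a k ∧ a k ≤ v ∧ moveToSupport x a b s₀ v = b k := by
  have h : ∃ k, a k ≤ v ∧ ∀ l, a l ≤ v → a l ≤ a k := by
    obtain ⟨k, hk, hmax⟩ := Finset.exists_max_image ({k | a k ≤ v} : Finset (Fin n)) a ⟨j, by simpa⟩
    exact ⟨k, by simpa using hk, fun l hl => hmax l (by simpa)⟩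
  refine ⟨h.choose, h.choose_spec.2 j hj, h.choose_spec.1, ?_⟩
  simp only [moveToSupport, targetOfLargestThreshold, if_neg hv, dif_pos h]

end MoveToSupport

section Threshold

variable {W : ℝ → ℝ}

theorem setOf_le_apply_eq_Ici (hWmono : MonotoneOn W (Set.Ioi 0)) {c a : ℝ}
    (ha : IsLeast {v | 0 < v ∧ c ≤ W v} a) : {v | 0 < v ∧ c ≤ W v} = Set.Ici a := by
  refine Set.Subset.antisymm (fun v hv => ha.2 hv) fun v hv => ?_
  have hv0 : 0 < v := ha.1.1.trans_le hv
  exact ⟨hv0, ha.1.2.trans (hWmono ha.1.1 hv0 hv)⟩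

theorem le_and_apply_eq_of_isLeast {m : ℕ} {x : Fin m → ℝ} (hx : ∀ i, 0 < x i) {c a b : ℝ}
    (ha : IsLeast {v | 0 < v ∧ c ≤ W v} a)
    (hb₁ : (∃ i, W (x i) = W a) → IsLeast {t | (∃ i, x i = t) ∧ W t = W a} b)
    (hb₂ : (¬ ∃ i, W (x i) = W a) → b = a) :
    a ≤ b ∧ W b = W a := by
  by_cases h : ∃ i, W (x i) = W a
  · obtain ⟨⟨i, rfl⟩, hW⟩ := (hb₁ h).1
    exact ⟨ha.2 ⟨hx i, hW ▸ ha.1.2⟩, hW⟩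
  · simp [hb₂ h]

theorem antitoneOn_ofReal_inv (hWpos : ∀ v, 0 < v → 0 < W v) (hWmono : MonotoneOn W (Set.Ioi 0)) :
    AntitoneOn (fun v => ENNReal.ofReal (W v)⁻¹) (Set.Ioi 0) :=
  fun u hu _ hv huv => ENNReal.ofReal_le_ofReal (inv_anti₀ (hWpos u hu) (hWmono hu hv huv))

end Threshold

theorem stmt12_general (W : ℝ → ℝ) (hWpos : ∀ v : ℝ, 0 < v → 0 < W v)
    (hWmono : MonotoneOn W (Set.Ioi 0))
    (m n : ℕ) (hmn : 1 ≤ m + n)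
    (x : Fin m → ℝ) (hx : ∀ i, 0 < x i) (y : Fin n → ℝ)
    (Winv : Fin n → ℝ)
    (hWinv : ∀ j, IsLeast {v : ℝ | 0 < v ∧ y j ≤ W v} (Winv j))
    (Winvx : Fin n → ℝ)
    (hWinvx₁ : ∀ j, (∃ i, W (x i) = W (Winv j)) →
      IsLeast {t : ℝ | (∃ i, x i = t) ∧ W t = W (Winv j)} (Winvx j))
    (hWinvx₂ : ∀ j, (¬ ∃ i, W (x i) = W (Winv j)) → Winvx j = Winv j)
    (G : Measure ℝ) [IsProbabilityMeasure G] :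
    ∃ G' : Measure ℝ, IsProbabilityMeasure G' ∧
      G' ((Set.range x ∪ Set.range Winvx)ᶜ) = 0 ∧
      (∏ i, G {x i}) *
          (∏ j, ∫⁻ v in {v : ℝ | 0 < v ∧ y j ≤ W v}, ENNReal.ofReal (W v)⁻¹ ∂G)
        ≤ (∏ i, G' {x i}) *
          (∏ j, ∫⁻ v in {v : ℝ | 0 < v ∧ y j ≤ W v}, ENNReal.ofReal (W v)⁻¹ ∂G') := by
  obtain ⟨s₀, hs₀⟩ : (Set.range x ∪ Set.range Winvx).Nonempty := by
    rcases m.eq_zero_or_pos with rfl | hm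
    · exact ⟨Winvx ⟨0, by omega⟩, .inr (Set.mem_range_self _)⟩
    · exact ⟨x ⟨0, hm⟩, .inl (Set.mem_range_self _)⟩
  have hWinv_pos j : 0 < Winv j := (hWinv j).1.1
  have hWinvx j := le_and_apply_eq_of_isLeast hx (hWinv j) (hWinvx₁ j) (hWinvx₂ j)
  have hf := measurable_moveToSupport x Winv Winvx s₀
  refine ⟨G.map (moveToSupport x Winv Winvx s₀), Measure.isProbabilityMeasure_map hf.aemeasurable, ?_, ?_⟩
  · rw [Measure.map_apply hf ((Set.finite_range x).union (Set.finite_range Winvx)).measurableSet.compl]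
    have : _ ⁻¹' (Set.range x ∪ Set.range Winvx)ᶜ = ∅ :=
      Set.eq_empty_of_forall_notMem fun v hv => hv (moveToSupport_mem x Winv Winvx s₀ hs₀ v)
    rw [this, measure_empty]
  simp only [setOf_le_apply_eq_Ici hWmono (hWinv _)]
  refine likelihood_le_likelihood_map hf x (moveToSupport_apply_atom x Winv Winvx s₀) _
    (fun _ => measurableSet_Ici) _ (fun j => aemeasurable_restrict_of_antitoneOn measurableSet_Ici ?_) ?_
  · exact (antitoneOn_ofReal_inv hWpos hWmono).mono (Set.Ici_subset_Ioi.2 (hWinv_pos j))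
  intro j v hv
  by_cases hvx : v ∈ Set.range x
  · simp [moveToSupport, hvx, hv]
  obtain ⟨k, hjk, hkv, hfv⟩ := exists_moveToSupport_eq x Winv Winvx s₀ hvx hv
  rw [hfv, (hWinvx k).2]
  exact ⟨hjk.trans (hWinvx k).1, ENNReal.ofReal_le_ofReal <| inv_anti₀ (hWpos _ (hWinv_pos k))
    (hWmono (hWinv_pos k) ((hWinv_pos j).trans_le hv) hkv)⟩

/-- For every Borel probability measure `G` on `(0,∞)`, there exists a
Borel probability measure `G'` supported on the finite set
`{x_1, ..., x_m, W⁻¹(y_1|x), ..., W⁻¹(y_n|x)}` such that `L(G') ≥ L(G)`, where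
`W⁻¹(y_j|x) = min{x_i : W(x_i) = W(W⁻¹(y_j))}` if some `x_i` satisfies
`W(x_i) = W(W⁻¹(y_j))`, and `W⁻¹(y_j|x) = W⁻¹(y_j)` otherwise. -/
theorem stmt12 (W : ℝ → ℝ) (hWpos : ∀ v : ℝ, 0 < v → 0 < W v)
    (hWmono : MonotoneOn W (Set.Ioi 0))
    (hWrc : ∀ v : ℝ, 0 < v → ContinuousWithinAt W (Set.Ici v) v)
    (m n : ℕ) (hmn : 1 ≤ m + n)
    (x : Fin m → ℝ) (hx : ∀ i, 0 < x i) (y : Fin n → ℝ) (hy : ∀ j, 0 < y j)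
    (Winv : Fin n → ℝ)
    (hWinv : ∀ j, IsLeast {v : ℝ | 0 < v ∧ y j ≤ W v} (Winv j))
    (Winvx : Fin n → ℝ)
    (hWinvx₁ : ∀ j, (∃ i, W (x i) = W (Winv j)) →
      IsLeast {t : ℝ | (∃ i, x i = t) ∧ W t = W (Winv j)} (Winvx j))
    (hWinvx₂ : ∀ j, (¬ ∃ i, W (x i) = W (Winv j)) → Winvx j = Winv j)
    (G : Measure ℝ) [IsProbabilityMeasure G] (hG : G (Set.Iic 0) = 0) :
    ∃ G' : Measure ℝ, IsProbabilityMeasure G' ∧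
      G' ((Set.range x ∪ Set.range Winvx)ᶜ) = 0 ∧
      (∏ i, G {x i}) *
          (∏ j, ∫⁻ v in {v : ℝ | 0 < v ∧ y j ≤ W v}, ENNReal.ofReal (W v)⁻¹ ∂G)
        ≤ (∏ i, G' {x i}) *
          (∏ j, ∫⁻ v in {v : ℝ | 0 < v ∧ y j ≤ W v}, ENNReal.ofReal (W v)⁻¹ ∂G') :=
  stmt12_general W hWpos hWmono m n hmn x hx y Winv hWinv Winvx hWinvx₁ hWinvx₂ G
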